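/- Let n ≥ 1 and let u : ℝⁿ × (0,∞) → ℝ be such that y ↦ u(y,t) is differentiable for every t > 0. Define Nu(x) = sup{ |u(y,t)| : y ∈ ℝⁿ, t > 0, |x−y| < t }, u⁺(x) = sup_{t>0} |u(x,t)|, and Gu(x) = sup{ t ‖∇_y u(y,t)‖ : y ∈ ℝⁿ, t > 0, |x−y| < 2t }, where ∇_y denotes the gradient in the first variable. Assume Nu, u⁺, and Gu are Lebesgue measurable. Then there exists a constant A = A(n) > 0, depending only on n, such that for every s > 0 and every r with 0 < r ≤ 1, |{ x : Nu(x) > s and Gu(x) ≤ s/r }| ≤ A r^{-n} |{ x : u⁺(x) > s/2 }|, where |·| denotes Lebesgue measure. -/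
import Mathlib


open MeasureTheory Set
open scoped ENNReal

/-- The nontangential maximal function `Nu(x) = sup_{|x−y|<t} |u(y,t)|`. -/
noncomputable def ntMax {n : ℕ} (u : EuclideanSpace ℝ (Fin n) → ℝ → ℝ)
    (x : EuclideanSpace ℝ (Fin n)) : ℝ≥0∞ :=
  ⨆ (y : EuclideanSpace ℝ (Fin n)) (t : ℝ) (_ : 0 < t) (_ : dist x y < t),
    ENNReal.ofReal |u y t|

/-- The radial maximal function `u⁺(x) = sup_{t>0} |u(x,t)|`. -/
noncomputable def radMax {n : ℕ} (u : EuclideanSpace ℝ (Fin n) → ℝ → ℝ)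
    (x : EuclideanSpace ℝ (Fin n)) : ℝ≥0∞ :=
  ⨆ (t : ℝ) (_ : 0 < t), ENNReal.ofReal |u x t|

/-- The nontangential gradient maximal function
`Gu(x) = sup_{|x−y|<2t} t ‖∇_y u(y,t)‖`. -/
noncomputable def gradMax {n : ℕ} (u : EuclideanSpace ℝ (Fin n) → ℝ → ℝ)
    (x : EuclideanSpace ℝ (Fin n)) : ℝ≥0∞ :=
  ⨆ (y : EuclideanSpace ℝ (Fin n)) (t : ℝ) (_ : 0 < t) (_ : dist x y < 2 * t),
    ENNReal.ofReal (t * ‖gradient (fun z => u z t) y‖)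

open Metric
/-- Key pointwise lemma: at each point of the bad set, there is a ball inside
`{u⁺ > s/2}` that occupies a definite fraction of a ball around `x`. -/
theorem keyLemma {n : ℕ} (u : EuclideanSpace ℝ (Fin n) → ℝ → ℝ)
    (hdiff : ∀ t : ℝ, 0 < t → Differentiable ℝ (fun y => u y t))
    {s r : ℝ} (hs : 0 < s) (hr : 0 < r) (hr1 : r ≤ 1)
    {x : EuclideanSpace ℝ (Fin n)}
    (hx1 : ENNReal.ofReal s < ntMax u x)
    (hx2 : gradMax u x ≤ ENNReal.ofReal (s / r)) :
    ∃ y : EuclideanSpace ℝ (Fin n), ∃ t : ℝ, 0 < t ∧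
      ball y (r * t / 2) ⊆ {z | ENNReal.ofReal (s / 2) < radMax u z} ∧
      ball y (r * t / 2) ⊆ closedBall x (2 * t) := by
  simp only [ntMax, lt_iSup_iff] at hx1
  obtain ⟨y, t, ht, hd, hgt⟩ := hx1
  have hus : s < |u y t| := by
    rw [ENNReal.ofReal_lt_ofReal_iff_of_nonneg hs.le] at hgt
    exact hgt
  refine ⟨y, t, ht, ?_, ?_⟩
  · -- gradient bound on ball x (2t)
    have hbound : ∀ w ∈ ball x (2 * t), ‖fderiv ℝ (fun z => u z t) w‖ ≤ s / (r * t) := by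
      intro w hw
      have h1 : ENNReal.ofReal (t * ‖gradient (fun z => u z t) w‖) ≤ ENNReal.ofReal (s / r) := by
        refine le_trans ?_ hx2
        rw [gradMax]
        rw [mem_ball, dist_comm] at hw
        exact le_iSup_of_le w <| le_iSup_of_le t <| le_iSup_of_le ht <| le_iSup_of_le hw le_rfl
      have h2 : t * ‖gradient (fun z => u z t) w‖ ≤ s / r :=
        (ENNReal.ofReal_le_ofReal_iff (by positivity)).mp h1
      have h3 : ‖gradient (fun z => u z t) w‖ = ‖fderiv ℝ (fun z => u z t) w‖ := by
        rw [gradient]; exact LinearIsometryEquiv.norm_map _ _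
      rw [h3] at h2
      have h4 : ‖fderiv ℝ (fun z => u z t) w‖ ≤ (s / r) / t := (le_div_iff₀' ht).mpr h2
      rwa [div_div] at h4
    intro z hz
    have hyb : y ∈ ball x (2 * t) := by
      rw [mem_ball, dist_comm]; linarith [hd]
    have hzb : z ∈ ball x (2 * t) := by
      rw [mem_ball] at hz ⊢
      have h4 : dist z x ≤ dist x y + dist z y := by
        rw [dist_comm z x]
        calc dist x z ≤ dist x y + dist y z := dist_triangle x y z
          _ = dist x y + dist z y := by rw [dist_comm y z]
      have h5 : r * t / 2 ≤ t / 2 := by nlinarith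
      linarith
    have hmvt := (convex_ball x (2 * t)).norm_image_sub_le_of_norm_fderiv_le
      (fun w _ => (hdiff t ht).differentiableAt) hbound hyb hzb
    have hzy : ‖z - y‖ ≤ r * t / 2 := by
      rw [← dist_eq_norm]; exact le_of_lt (mem_ball.mp hz)
    have hC : (0:ℝ) ≤ s / (r * t) := by positivity
    have h5 : ‖u z t - u y t‖ ≤ s / 2 := by
      calc ‖u z t - u y t‖ ≤ s / (r * t) * ‖z - y‖ := hmvt
        _ ≤ s / (r * t) * (r * t / 2) := by nlinarith
        _ = s / 2 := by field_simp
    have h6 : s / 2 < |u z t| := by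
      have := abs_sub_abs_le_abs_sub (u y t) (u z t)
      rw [abs_sub_comm] at this
      rw [Real.norm_eq_abs] at h5
      linarith
    show ENNReal.ofReal (s / 2) < radMax u z
    calc ENNReal.ofReal (s / 2) < ENNReal.ofReal |u z t| := by
          exact (ENNReal.ofReal_lt_ofReal_iff_of_nonneg (by positivity)).mpr h6
      _ ≤ radMax u z := le_iSup_of_le t (le_iSup_of_le ht le_rfl)
  · intro z hz
    rw [mem_ball] at hz
    rw [mem_closedBall]
    have h4 : dist z x ≤ dist x y + dist z y := by
      rw [dist_comm z x]
      calc dist x z ≤ dist x y + dist y z := dist_triangle x y z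
        _ = dist x y + dist z y := by rw [dist_comm y z]
    have h5 : r * t / 2 ≤ t / 2 := by nlinarith
    linarith

/-- The good-λ inequality (5.5) of the paper:
`|{Nu > s} ∩ {Gu ≤ s/r}| ≤ A r^{-n} |{u⁺ > s/2}|` with `A = A(n)`. -/
theorem stmt_14 (n : ℕ) (hn : 1 ≤ n) :
    ∃ A > (0:ℝ), ∀ (u : EuclideanSpace ℝ (Fin n) → ℝ → ℝ),
      (∀ t : ℝ, 0 < t → Differentiable ℝ (fun y => u y t)) →
      Measurable (ntMax u) → Measurable (radMax u) → Measurable (gradMax u) →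
      ∀ s > (0:ℝ), ∀ r : ℝ, 0 < r → r ≤ 1 →
      volume {x | ENNReal.ofReal s < ntMax u x ∧
          gradMax u x ≤ ENNReal.ofReal (s / r)}
        ≤ ENNReal.ofReal (A / r ^ n) *
            volume {x | ENNReal.ofReal (s / 2) < radMax u x} := by
  refine ⟨16 ^ n, by positivity, ?_⟩
  intro u hdiff _ _ _ s hs r hr hr1
  haveI : Nontrivial (EuclideanSpace ℝ (Fin n)) :=
    Module.nontrivial_of_finrank_pos (R := ℝ) (by rw [finrank_euclideanSpace_fin]; omega)
  set F := {x : EuclideanSpace ℝ (Fin n) | ENNReal.ofReal (s / 2) < radMax u x} with hFdef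
  set Eset := {x : EuclideanSpace ℝ (Fin n) | ENNReal.ofReal s < ntMax u x ∧
      gradMax u x ≤ ENNReal.ofReal (s / r)} with hEdef
  have hcoef : (16:ℝ) ^ n / r ^ n = (16 / r) ^ n := (div_pow 16 r n).symm
  rw [hcoef]
  have hcoefpos : (0:ℝ) < (16 / r) ^ n := by positivity
  by_cases hFtop : volume F = ⊤
  · rw [hFtop, ENNReal.mul_top (by simpa [ENNReal.ofReal_eq_zero, not_le] using hcoefpos)]
    exact le_top
  -- basic facts about unit ball volume
  set ω := volume (ball (0 : EuclideanSpace ℝ (Fin n)) 1) with hωdef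
  have hω0 : ω ≠ 0 := (measure_ball_pos _ _ one_pos).ne'
  have hωtop : ω ≠ ⊤ := measure_ball_lt_top.ne
  have hballvol : ∀ (x : EuclideanSpace ℝ (Fin n)) (ρ : ℝ), 0 ≤ ρ →
      volume (ball x ρ) = ENNReal.ofReal (ρ ^ n) * ω := by
    intro x ρ hρ
    have := Measure.addHaar_ball volume x hρ
    rwa [finrank_euclideanSpace_fin] at this
  have hcballvol : ∀ (x : EuclideanSpace ℝ (Fin n)) (ρ : ℝ), 0 ≤ ρ →
      volume (closedBall x ρ) = ENNReal.ofReal (ρ ^ n) * ω := by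
    intro x ρ hρ
    have := Measure.addHaar_closedBall volume x hρ
    rwa [finrank_euclideanSpace_fin] at this
  -- choose the balls from the key lemma
  have key : ∀ x : EuclideanSpace ℝ (Fin n), ∃ y t, x ∈ Eset →
      (0 < t ∧ ball y (r * t / 2) ⊆ F ∧ ball y (r * t / 2) ⊆ closedBall x (2 * t)) := by
    intro x
    by_cases hx : x ∈ Eset
    · obtain ⟨y, t, h1, h2, h3⟩ := keyLemma u hdiff hs hr hr1 hx.1 hx.2
      exact ⟨y, t, fun _ => ⟨h1, h2, h3⟩⟩
    · exact ⟨x, 1, fun h => absurd h hx⟩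
  choose Y T hYT using key
  -- uniform bound on the radii
  set c := (volume F / ω).toReal with hcdef
  have hTbound : ∀ x ∈ Eset, 2 * T x ≤ 4 * max 1 c / r := by
    intro x hx
    obtain ⟨ht, hsubF, -⟩ := hYT x hx
    have h1 : ENNReal.ofReal ((r * T x / 2) ^ n) * ω ≤ volume F := by
      rw [← hballvol (Y x) _ (by positivity)]
      exact measure_mono hsubF
    have h2 : ENNReal.ofReal ((r * T x / 2) ^ n) ≤ volume F / ω :=
      (ENNReal.le_div_iff_mul_le (Or.inl hω0) (Or.inl hωtop)).mpr h1
    have h3 : (r * T x / 2) ^ n ≤ c := by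
      have h4 : volume F / ω ≠ ⊤ := (ENNReal.div_lt_top hFtop hω0).ne
      have := ENNReal.toReal_mono h4 h2
      rwa [ENNReal.toReal_ofReal (by positivity)] at this
    have h5 : r * T x / 2 ≤ max 1 c := by
      rcases le_or_gt (r * T x / 2) 1 with h | h
      · exact h.trans (le_max_left _ _)
      · refine le_trans ?_ ((le_max_right 1 c).trans_eq rfl)
        calc r * T x / 2 ≤ (r * T x / 2) ^ n := le_self_pow₀ h.le (by omega)
          _ ≤ c := h3
    rw [le_div_iff₀ hr]
    nlinarith [le_max_left 1 c]
  -- Vitali covering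
  obtain ⟨v, hvE, hvdisj, hvcov⟩ :=
    Vitali.exists_disjoint_subfamily_covering_enlargement_closedBall Eset id
      (fun a => 2 * T a) (4 * max 1 c / r) hTbound 4 (by norm_num)
  have hvcount : v.Countable := by
    refine hvdisj.countable_of_nonempty_interior fun b hb => ?_
    have hTb : 0 < T b := (hYT b (hvE hb)).1
    exact (nonempty_ball.mpr (by positivity)).mono ball_subset_interior_closedBall
  have hcover : Eset ⊆ ⋃ b ∈ v, closedBall b (4 * (2 * T b)) := by
    intro a ha
    obtain ⟨b, hb, hsub⟩ := hvcov a ha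
    have hTa : 0 < T a := (hYT a ha).1
    exact mem_biUnion hb (hsub (mem_closedBall_self (by positivity)))
  have hdisj' : v.PairwiseDisjoint fun b => ball (Y b) (r * T b / 2) := by
    intro a ha b hb hab
    exact (hvdisj ha hb hab).mono (hYT a (hvE ha)).2.2 (hYT b (hvE hb)).2.2
  calc volume Eset ≤ volume (⋃ b ∈ v, closedBall b (4 * (2 * T b))) := measure_mono hcover
    _ ≤ ∑' b : v, volume (closedBall (b : EuclideanSpace ℝ (Fin n)) (4 * (2 * T b))) :=
        measure_biUnion_le volume hvcount _
    _ ≤ ∑' b : v, ENNReal.ofReal ((16 / r) ^ n) *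
          volume (ball (Y b) (r * T (b : EuclideanSpace ℝ (Fin n)) / 2)) := by
        refine ENNReal.tsum_le_tsum fun b => ?_
        have hTb : 0 < T (b : EuclideanSpace ℝ (Fin n)) := (hYT _ (hvE b.2)).1
        have heq : (16 / r) ^ n * (r * T (b : EuclideanSpace ℝ (Fin n)) / 2) ^ n =
            (4 * (2 * T (b : EuclideanSpace ℝ (Fin n)))) ^ n := by
          rw [← mul_pow]
          congr 1
          field_simp
          ring
        apply le_of_eq
        rw [hcballvol _ _ (by positivity), hballvol _ _ (by positivity), ← heq,
          ENNReal.ofReal_mul (by positivity : (0:ℝ) ≤ (16 / r) ^ n), mul_assoc]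
    _ = ENNReal.ofReal ((16 / r) ^ n) *
          ∑' b : v, volume (ball (Y b) (r * T (b : EuclideanSpace ℝ (Fin n)) / 2)) :=
        ENNReal.tsum_mul_left
    _ = ENNReal.ofReal ((16 / r) ^ n) * volume (⋃ b ∈ v, ball (Y b) (r * T b / 2)) := by
        rw [measure_biUnion hvcount hdisj' fun b _ => measurableSet_ball]
    _ ≤ ENNReal.ofReal ((16 / r) ^ n) * volume F := by
        gcongr
        exact iUnion₂_subset fun b hb => (hYT b (hvE hb)).2.1
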